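/- arXiv:2307.06079 — 2 statements merged into one kernel-verified Lean document; each statement's English description precedes it below -/
import Mathlib

section
/- Let C ⊆ (ZMod (p^s))^n be a nonzero submodule of rank K (minimal number of generators). Then d_L(C) ≤ M·(n - K + 1), where M = ⌊p^s/2⌋. -/
/-- Lee weight of an element of `ZMod m`. -/
def leeWt (m : ℕ) (x : ZMod m) : ℕ := min x.val (m - x.val)

/-- Lee weight of a vector over `ZMod m`. -/
def leeWtVec (m n : ℕ) (x : Fin n → ZMod m) : ℕ := ∑ i, leeWt m (x i)

/-- The minimum Lee distance of a code. -/
noncomputable def minLeeDist (m n : ℕ) (D : Set (Fin n → ZMod m)) : ℕ :=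
  sInf {w : ℕ | ∃ c ∈ D, c ≠ 0 ∧ w = leeWtVec m n c}

/-- The rank of a code: the minimal cardinality of a generating set. -/
noncomputable def codeRank (p s n : ℕ) (C : Submodule (ZMod (p ^ s)) (Fin n → ZMod (p ^ s))) : ℕ :=
  sInf {m : ℕ | ∃ S : Finset (Fin n → ZMod (p ^ s)), S.card = m ∧
    Submodule.span (ZMod (p ^ s)) (S : Set (Fin n → ZMod (p ^ s))) = C}

/-!
Submodules of `(ℤ/q)^m` need at most `m` generators: they are images of submodules of `ℤ^m`,
which are free of rank at most `m`. Hence if no nonzero codeword of `C` vanished on some `K - 1`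
coordinates, projecting onto those coordinates would embed `C` into `(ℤ/q)^(K-1)` and `C` would
be generated by `K - 1` elements. So some nonzero codeword has at most `n - K + 1` nonzero
entries, and each entry has Lee weight at most `⌊q/2⌋`.
-/

open Submodule

theorem Submodule.spanFinrank_map_eq_of_disjoint_ker {R M N : Type*} [Ring R]
    [AddCommGroup M] [Module R M] [AddCommGroup N] [Module R N] (f : M →ₗ[R] N)
    {C : Submodule R M} (hf : Disjoint C (LinearMap.ker f)) :
    (C.map f).spanFinrank = C.spanFinrank := by
  rw [← LinearMap.range_domRestrict, LinearMap.range_eq_map, ← spanFinrank_top C,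
    spanFinrank_map_eq_of_injective _ (LinearMap.injective_domRestrict_iff.mpr hf)]

namespace ZMod

variable (q : ℕ) (ι : Type*)

def castPiLinearMap : (ι → ℤ) →ₗ[ℤ] (ι → ZMod q) :=
  LinearMap.compLeft (Int.castAddHom (ZMod q)).toIntLinearMap ι

theorem castPiLinearMap_surjective : Function.Surjective (castPiLinearMap q ι) :=
  Function.Surjective.comp_left intCast_surjective

instance isNoetherian_pi [Finite ι] : IsNoetherian (ZMod q) (ι → ZMod q) :=
  have : IsNoetherian ℤ (ι → ZMod q) :=
    isNoetherian_of_surjective _ (LinearMap.range_eq_top.2 (castPiLinearMap_surjective q ι))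
  isNoetherian_of_tower ℤ this

variable {ι}

theorem spanFinrank_le_card [Fintype ι] (D : Submodule (ZMod q) (ι → ZMod q)) :
    D.spanFinrank ≤ Fintype.card ι := by
  set N := (D.restrictScalars ℤ).comap (castPiLinearMap q ι)
  have hN : N.map (castPiLinearMap q ι) = D.restrictScalars ℤ :=
    map_comap_eq_of_surjective (castPiLinearMap_surjective q ι) _
  calc D.spanFinrank = (D.restrictScalars ℤ).spanFinrank := by
        rw [spanFinrank, spanFinrank, spanRank_restrictScalars_eq intCast_surjective]
    _ ≤ N.spanFinrank := hN ▸ spanFinrank_map_le_of_fg _ (IsNoetherian.noetherian N)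
    _ = Module.finrank ℤ N := by rw [Module.finrank_eq_spanFinrank_of_free, spanFinrank_top]
    _ ≤ Fintype.card ι := by simpa using Submodule.finrank_le N

theorem exists_ne_zero_forall_eq_zero_of_card_lt_spanFinrank
    (C : Submodule (ZMod q) (ι → ZMod q)) (I : Finset ι) (hI : I.card < C.spanFinrank) :
    ∃ c ∈ C, c ≠ 0 ∧ ∀ i ∈ I, c i = 0 := by
  let f := LinearMap.funLeft (ZMod q) (ZMod q) ((↑) : I → ι)
  by_contra! h
  have hf : Disjoint C (LinearMap.ker f) := by
    refine Submodule.disjoint_def.2 fun c hc hcf => by_contra fun hc0 => ?_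
    obtain ⟨i, hi, hci⟩ := h c hc hc0
    exact hci (congrFun hcf ⟨i, hi⟩)
  have := spanFinrank_le_card q (C.map f)
  rw [spanFinrank_map_eq_of_disjoint_ker f hf, Fintype.card_coe] at this
  omega

theorem exists_ne_zero_hammingNorm_add_spanFinrank_le [Fintype ι]
    {C : Submodule (ZMod q) (ι → ZMod q)} (hC : C ≠ ⊥) :
    ∃ c ∈ C, c ≠ 0 ∧ hammingNorm c + C.spanFinrank ≤ Fintype.card ι + 1 := by
  classical
  have hpos : 0 < C.spanFinrank := Nat.pos_of_ne_zero fun h =>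
    hC ((spanFinrank_eq_zero_iff_eq_bot (IsNoetherian.noetherian C)).1 h)
  have hle := spanFinrank_le_card q C
  obtain ⟨I, -, hI⟩ := Finset.exists_subset_card_eq (s := Finset.univ) (n := C.spanFinrank - 1)
    (by simpa using (Nat.sub_le _ _).trans hle)
  obtain ⟨c, hcC, hc0, hcI⟩ :=
    exists_ne_zero_forall_eq_zero_of_card_lt_spanFinrank q C I (by omega)
  have hsupp : hammingNorm c ≤ Iᶜ.card := Finset.card_le_card fun i hi =>
    Finset.mem_compl.2 fun hiI => (Finset.mem_filter.1 hi).2 (hcI i hiI)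
  rw [Finset.card_compl] at hsupp
  exact ⟨c, hcC, hc0, by omega⟩

end ZMod

theorem codeRank_eq_spanFinrank (p s n : ℕ)
    (C : Submodule (ZMod (p ^ s)) (Fin n → ZMod (p ^ s))) :
    codeRank p s n C = C.spanFinrank := by
  rw [spanFinrank_eq_iInf, codeRank, iInf]
  congr 1
  ext m
  simp only [Set.mem_ofPred_eq, Set.mem_range, Subtype.exists, exists_prop]
  exact exists_congr fun S => by rw [eq_comm, and_comm]

theorem leeWt_le_half (m : ℕ) (x : ZMod m) : leeWt m x ≤ m / 2 := by
  unfold leeWt; omega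

theorem leeWtVec_le_hammingNorm_mul (m n : ℕ) (c : Fin n → ZMod m) :
    leeWtVec m n c ≤ hammingNorm c * (m / 2) := by
  classical
  rw [leeWtVec, hammingNorm, ← Finset.sum_filter_of_ne (p := fun i => c i ≠ 0)
    fun i _ h hc => h (by simp [hc, leeWt])]
  exact Finset.sum_le_card_nsmul _ _ _ fun i _ => leeWt_le_half m (c i)

theorem lee_singleton_bound_rank_general (p s n : ℕ)
    (C : Submodule (ZMod (p ^ s)) (Fin n → ZMod (p ^ s))) (hC : C ≠ ⊥) (K : ℕ)
    (hK : K = codeRank p s n C) :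
    minLeeDist (p ^ s) n (C : Set (Fin n → ZMod (p ^ s))) ≤ (p ^ s / 2) * (n - K + 1) := by
  obtain ⟨c, hcC, hc0, hc⟩ := ZMod.exists_ne_zero_hammingNorm_add_spanFinrank_le (p ^ s) hC
  rw [Fintype.card_fin, ← codeRank_eq_spanFinrank, ← hK] at hc
  calc minLeeDist (p ^ s) n C ≤ leeWtVec (p ^ s) n c := Nat.sInf_le ⟨c, hcC, hc0, rfl⟩
    _ ≤ hammingNorm c * (p ^ s / 2) := leeWtVec_le_hammingNorm_mul _ _ c
    _ ≤ (p ^ s / 2) * (n - K + 1) := by rw [mul_comm]; gcongr; omega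

theorem lee_singleton_bound_rank (p s n : ℕ) (hp : p.Prime) (hs : 0 < s) (hn : 0 < n)
    (C : Submodule (ZMod (p ^ s)) (Fin n → ZMod (p ^ s))) (hC : C ≠ ⊥) (K : ℕ)
    (hK : K = codeRank p s n C) :
    minLeeDist (p ^ s) n (C : Set (Fin n → ZMod (p ^ s))) ≤ (p ^ s / 2) * (n - K + 1) :=
  lee_singleton_bound_rank_general p s n C hC K hK
end

section
/- Let C ⊆ (ZMod (p^s))^n be a free submodule of rank K with generator matrix (I_K | A) where A ∈ (ZMod (p^s))^{K × (n-K)}. If for some 1 ≤ ℓ < s every entry of one row of A is divisible by p^ℓ, then d_L(C) ≤ p^{s-ℓ}. -/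
/-- Lee weight of a vector over `ZMod m` indexed by a finite type. -/
def leeWtF (m : ℕ) {ι : Type} [Fintype ι] (x : ι → ZMod m) : ℕ := ∑ i, leeWt m (x i)

/-- The free code with generator matrix `(I_K | A)`: the set of words
`(u | u·A)` for messages `u`. -/
def freeCode (p s K t : ℕ) (A : Matrix (Fin K) (Fin t) (ZMod (p ^ s))) :
    Set ((Fin K ⊕ Fin t) → ZMod (p ^ s)) :=
  {c | ∃ u : Fin K → ZMod (p ^ s), c = Sum.elim u (fun j => ∑ i, u i * A i j)}

theorem ZMod.natCast_pow_mul_pow_eq_zero {p s a b : ℕ} (h : s ≤ a + b) :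
    (p : ZMod (p ^ s)) ^ a * (p : ZMod (p ^ s)) ^ b = 0 := by
  rw [← pow_add, ← Nat.cast_pow, ZMod.natCast_eq_zero_iff]
  exact pow_dvd_pow p h

theorem ZMod.val_natCast_pow {p s a : ℕ} (hp : 1 < p) (ha : a < s) :
    ((p : ZMod (p ^ s)) ^ a).val = p ^ a := by
  rw [← Nat.cast_pow, ZMod.val_natCast_of_lt (Nat.pow_lt_pow_right hp ha)]

theorem leeWt_zero (m : ℕ) : leeWt m 0 = 0 := by
  simp [leeWt]

theorem leeWt_le_val (m : ℕ) (x : ZMod m) : leeWt m x ≤ x.val :=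
  min_le_left _ _

theorem leeWtF_single (m : ℕ) {ι : Type} [Fintype ι] [DecidableEq ι] (i : ι) (x : ZMod m) :
    leeWtF m (Pi.single i x) = leeWt m x := by
  rw [leeWtF, ← Fintype.sum_pi_single' i (leeWt m x)]
  exact Finset.sum_congr rfl fun k _ ↦
    Pi.apply_single (fun _ ↦ leeWt m) (fun _ ↦ leeWt_zero m) i x k

theorem single_inl_mem_freeCode {p s K t : ℕ} (A : Matrix (Fin K) (Fin t) (ZMod (p ^ s)))
    (i : Fin K) (x : ZMod (p ^ s)) (hx : ∀ j, x * A i j = 0) :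
    Pi.single (Sum.inl i) x ∈ freeCode p s K t A := by
  refine ⟨Pi.single i x, ?_⟩
  change _ = Sum.elim _ (Matrix.vecMul (Pi.single i x) A)
  have hcheck : Matrix.vecMul (Pi.single i x) A = 0 := by
    rw [Matrix.single_vecMul]
    exact funext hx
  rw [hcheck, Sum.elim_single_zero]

theorem filtration_bound_row_divisible_general (p s n K ℓ : ℕ) (hp : p.Prime) (hs : 0 < s)
    (A : Matrix (Fin K) (Fin (n - K)) (ZMod (p ^ s)))
    (hℓ : 1 ≤ ℓ)
    (hrow : ∃ i : Fin K, ∀ j : Fin (n - K),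
      ∃ y : ZMod (p ^ s), A i j = (p : ZMod (p ^ s)) ^ ℓ * y) :
    sInf {w : ℕ | ∃ c ∈ freeCode p s K (n - K) A, c ≠ 0 ∧ w = leeWtF (p ^ s) c} ≤
      p ^ (s - ℓ) := by
  obtain ⟨i, hi⟩ := hrow
  set q : ZMod (p ^ s) := (p : ZMod (p ^ s)) ^ (s - ℓ)
  have hq_val : q.val = p ^ (s - ℓ) := ZMod.val_natCast_pow hp.one_lt (by omega)
  have hq_ne : q ≠ 0 := fun h ↦ by
    simp only [h, ZMod.val_zero] at hq_val
    exact pow_ne_zero _ hp.ne_zero hq_val.symm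
  have hq_row : ∀ j, q * A i j = 0 := fun j ↦ by
    obtain ⟨y, hy⟩ := hi j
    rw [hy, ← mul_assoc, ZMod.natCast_pow_mul_pow_eq_zero (by omega), zero_mul]
  calc sInf {w : ℕ | ∃ c ∈ freeCode p s K (n - K) A, c ≠ 0 ∧ w = leeWtF (p ^ s) c}
      ≤ leeWtF (p ^ s) (Pi.single (Sum.inl i) q) :=
        Nat.sInf_le ⟨_, single_inl_mem_freeCode A i q hq_row,
          Pi.single_ne_zero_iff.mpr hq_ne, rfl⟩
    _ = leeWt (p ^ s) q := leeWtF_single _ _ _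
    _ ≤ p ^ (s - ℓ) := hq_val ▸ leeWt_le_val _ _

theorem filtration_bound_row_divisible (p s n K ℓ : ℕ) (hp : p.Prime) (hs : 0 < s)
    (hK : 0 < K) (hKn : K ≤ n) (A : Matrix (Fin K) (Fin (n - K)) (ZMod (p ^ s)))
    (hℓ : 1 ≤ ℓ) (hℓs : ℓ < s)
    (hrow : ∃ i : Fin K, ∀ j : Fin (n - K),
      ∃ y : ZMod (p ^ s), A i j = (p : ZMod (p ^ s)) ^ ℓ * y) :
    sInf {w : ℕ | ∃ c ∈ freeCode p s K (n - K) A, c ≠ 0 ∧ w = leeWtF (p ^ s) c} ≤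
      p ^ (s - ℓ) :=
  filtration_bound_row_divisible_general p s n K ℓ hp hs A hℓ hrow
end
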